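/- arXiv:1507.01621 — 3 statements merged into one kernel-verified Lean document; each statement's English description precedes it below -/
import Mathlib

section
/- Let s₁, s₂ ∈ ℝ and 1 ≤ q₁, q₂ ≤ ∞ with 1/q₁ + 1/q₂ ≤ 1; set s₃ := s₁ + s₂ and 1/q₃ := 1/q₁ + 1/q₂. Then for u ∈ M^{s₁,q₁} and v ∈ M^{s₂,q₂}, the product uv belongs to M^{s₃,q₃} and ‖uv‖_{M^{s₃,q₃}} ≤ ‖u‖_{M^{s₁,q₁}} ‖v‖_{M^{s₂,q₂}}. -/
open MeasureTheory Metric Filter ENNReal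

noncomputable section

abbrev Euc (N : ℕ) := EuclideanSpace ℝ (Fin N)

def pd {N : ℕ} (i : Fin N) (φ : Euc N → ℂ) : Euc N → ℂ :=
  fun x => fderiv ℝ φ x (EuclideanSpace.single i 1)

def mderiv {N : ℕ} (α : Fin N → ℕ) (φ : Euc N → ℂ) : Euc N → ℂ :=
  (List.finRange N).foldr (fun i ψ => (pd i)^[α i] ψ) φ

def IsTest {N : ℕ} (φ : Euc N → ℂ) : Prop := ContDiff ℝ (⊤ : ℕ∞) φ ∧ HasCompactSupport φ

def IsWeakDeriv {N : ℕ} (u : Euc N → ℂ) (α : Fin N → ℕ) (v : Euc N → ℂ) : Prop :=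
  ∀ φ : Euc N → ℂ, IsTest φ →
    ∫ x, v x * φ x = (-1 : ℂ) ^ (∑ i, α i) * ∫ x, u x * mderiv α φ x

def multiIdx (N m : ℕ) : Finset (Fin N → ℕ) :=
  (Fintype.piFinset fun _ => Finset.range (m+1)).filter fun α => (∑ i, α i) = m

def Mnorm {N : ℕ} (s : ℝ) (q : ℝ≥0∞) (u : Euc N → ℂ) : ℝ≥0∞ :=
  ⨆ R : {R : ℝ // 1 ≤ R},
    ENNReal.ofReal ((R : ℝ) ^ (-(s + N / q.toReal))) *
      eLpNorm u q (volume.restrict (ball (0 : Euc N) (R : ℝ)))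

def MemM {N : ℕ} (s : ℝ) (q : ℝ≥0∞) (u : Euc N → ℂ) : Prop :=
  AEStronglyMeasurable u volume ∧ Mnorm s q u < ⊤

def MemM0 {N : ℕ} (s : ℝ) (q : ℝ≥0∞) (u : Euc N → ℂ) : Prop :=
  AEStronglyMeasurable u volume ∧
    Tendsto (fun R : ℝ =>
      ENNReal.ofReal (R ^ (-(s + N / q.toReal))) *
        eLpNorm u q (volume.restrict (ball (0 : Euc N) R))) atTop (nhds 0)

def evalPoly {N : ℕ} (P : MvPolynomial (Fin N) ℂ) : Euc N → ℂ :=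
  fun x => MvPolynomial.eval (fun i => (x i : ℂ)) P

def mpderiv {N : ℕ} (α : Fin N → ℕ) (P : MvPolynomial (Fin N) ℂ) : MvPolynomial (Fin N) ℂ :=
  (List.finRange N).foldr (fun i Q => (fun Q' => MvPolynomial.pderiv i Q')^[α i] Q) P

/-- **Generalized Hölder inequality** on the spaces `M^{s,q}`: if `1/q₁ + 1/q₂ ≤ 1`,
`s₃ = s₁ + s₂` and `1/q₃ = 1/q₁ + 1/q₂`, then multiplication maps
`M^{s₁,q₁} × M^{s₂,q₂}` into `M^{s₃,q₃}` with
`‖uv‖_{M^{s₃,q₃}} ≤ ‖u‖_{M^{s₁,q₁}} ‖v‖_{M^{s₂,q₂}}`. -/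
theorem Msq_holder {N : ℕ} (s₁ s₂ : ℝ) (q₁ q₂ q₃ : ℝ≥0∞)
    (hq₁ : 1 ≤ q₁) (hq₂ : 1 ≤ q₂) (hsum : q₁⁻¹ + q₂⁻¹ ≤ 1)
    (hq₃ : q₃⁻¹ = q₁⁻¹ + q₂⁻¹)
    (u v : Euc N → ℂ) (hu : MemM s₁ q₁ u) (hv : MemM s₂ q₂ v) :
    MemM (s₁ + s₂) q₃ (u * v) ∧
      Mnorm (s₁ + s₂) q₃ (u * v) ≤ Mnorm s₁ q₁ u * Mnorm s₂ q₂ v := by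
  -- exponent arithmetic on toReal
  have hinv₁ : q₁⁻¹ ≠ ⊤ := by
    intro h; rw [ENNReal.inv_eq_top] at h; simp [h] at hq₁
  have hinv₂ : q₂⁻¹ ≠ ⊤ := by
    intro h; rw [ENNReal.inv_eq_top] at h; simp [h] at hq₂
  have htr : (N : ℝ) / q₃.toReal = N / q₁.toReal + N / q₂.toReal := by
    have h1 : ∀ q : ℝ≥0∞, (N : ℝ) / q.toReal = N * (q⁻¹).toReal := by
      intro q; rw [ENNReal.toReal_inv, div_eq_mul_inv]
    rw [h1, h1, h1, hq₃, ENNReal.toReal_add hinv₁ hinv₂, mul_add]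
  have hmeas : AEStronglyMeasurable (u * v) volume := hu.1.mul hv.1
  -- Hölder on each ball
  have hold : ∀ R : ℝ,
      eLpNorm (u * v) q₃ (volume.restrict (ball (0 : Euc N) R)) ≤
        eLpNorm u q₁ (volume.restrict (ball (0 : Euc N) R)) *
          eLpNorm v q₂ (volume.restrict (ball (0 : Euc N) R)) := by
    intro R
    have := eLpNorm_le_eLpNorm_mul_eLpNorm'_of_norm
      (μ := volume.restrict (ball (0 : Euc N) R))
      (hu.1.restrict) (hv.1.restrict) (fun a b => a * b) 1
      (p := q₁) (q := q₂) (r := q₃)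
      (Eventually.of_forall fun x => by simpa using (norm_mul_le _ _))
      (hpqr := ⟨hq₃.symm⟩)
    rw [ENNReal.coe_one, one_mul] at this
    convert this using 3
    simp
  -- pointwise in R bound
  have key : ∀ R : {R : ℝ // 1 ≤ R},
      ENNReal.ofReal ((R : ℝ) ^ (-(s₁ + s₂ + N / q₃.toReal))) *
        eLpNorm (u * v) q₃ (volume.restrict (ball (0 : Euc N) (R : ℝ))) ≤
      (ENNReal.ofReal ((R : ℝ) ^ (-(s₁ + N / q₁.toReal))) *
        eLpNorm u q₁ (volume.restrict (ball (0 : Euc N) (R : ℝ)))) *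
      (ENNReal.ofReal ((R : ℝ) ^ (-(s₂ + N / q₂.toReal))) *
        eLpNorm v q₂ (volume.restrict (ball (0 : Euc N) (R : ℝ)))) := by
    intro R
    have hR : (0 : ℝ) < R := lt_of_lt_of_le one_pos R.2
    have hsplit : ((R : ℝ) ^ (-(s₁ + s₂ + N / q₃.toReal)))
        = (R : ℝ) ^ (-(s₁ + N / q₁.toReal)) * (R : ℝ) ^ (-(s₂ + N / q₂.toReal)) := by
      rw [← Real.rpow_add hR]
      congr 1
      rw [htr]; ring
    rw [hsplit, ENNReal.ofReal_mul (Real.rpow_nonneg hR.le _)]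
    calc ENNReal.ofReal ((R : ℝ) ^ (-(s₁ + N / q₁.toReal))) *
          ENNReal.ofReal ((R : ℝ) ^ (-(s₂ + N / q₂.toReal))) *
          eLpNorm (u * v) q₃ (volume.restrict (ball (0 : Euc N) (R : ℝ)))
        ≤ ENNReal.ofReal ((R : ℝ) ^ (-(s₁ + N / q₁.toReal))) *
          ENNReal.ofReal ((R : ℝ) ^ (-(s₂ + N / q₂.toReal))) *
          (eLpNorm u q₁ (volume.restrict (ball (0 : Euc N) (R : ℝ))) *
           eLpNorm v q₂ (volume.restrict (ball (0 : Euc N) (R : ℝ)))) :=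
          mul_le_mul_right (hold R) _
      _ = _ := by ring
  have hbound : Mnorm (s₁ + s₂) q₃ (u * v) ≤ Mnorm s₁ q₁ u * Mnorm s₂ q₂ v := by
    simp only [Mnorm]
    refine iSup_le fun R => (key R).trans ?_
    refine mul_le_mul' ?_ ?_
    · apply le_iSup (fun R : {R : ℝ // 1 ≤ R} =>
        ENNReal.ofReal ((R : ℝ) ^ (-(s₁ + N / q₁.toReal))) *
          eLpNorm u q₁ (volume.restrict (ball (0 : Euc N) (R : ℝ))))
    · apply le_iSup (fun R : {R : ℝ // 1 ≤ R} =>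
        ENNReal.ofReal ((R : ℝ) ^ (-(s₂ + N / q₂.toReal))) *
          eLpNorm v q₂ (volume.restrict (ball (0 : Euc N) (R : ℝ))))
  exact ⟨⟨hmeas, lt_of_le_of_lt hbound (ENNReal.mul_lt_top hu.2 hv.2)⟩, hbound⟩
end
end

section
/- Let 1 ≤ q < ∞ and t > s ≥ -N/q. If u ∈ L^q_loc(ℝ^N) satisfies sup_{R≥1} R^{-s-N/q}‖u‖_{L^q(B_R)} < ∞, then ∫_{ℝ^N} (1+|x|)^{-tq-N} |u(x)|^q dx < ∞, and moreover ∫_{ℝ^N}(1+|x|)^{-tq-N}|u|^q ≤ C (∑_{j=1}^∞ j^{-(t-s)q-1}) · (sup_{R≥1} R^{-s-N/q}‖u‖_{L^q(B_R)})^q for a constant C depending only on N, q, t. -/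
open MeasureTheory Metric Filter ENNReal

noncomputable section

/-- **Embedding `M^{s,q} ↪ L^q_t` for `t > s ≥ -N/q`**: there is a constant `C`
depending only on `N, q, t` such that for every `u`,
`∫ (1+|x|)^{-tq-N}|u|^q ≤ C (∑_{j≥1} j^{-(t-s)q-1}) ‖u‖_{M^{s,q}}^q`;
in particular the weighted integral is finite whenever `‖u‖_{M^{s,q}} < ∞`. -/
theorem Msq_embeds_weighted {N : ℕ} (hN : 0 < N) (q : ℝ) (hq : 1 ≤ q)
    (s t : ℝ) (hst : s < t) (hs : -(N / q) ≤ s) :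
    ∃ C : ℝ≥0∞, C ≠ ⊤ ∧ ∀ u : Euc N → ℂ, AEMeasurable u volume →
      ((∫⁻ x : Euc N, (ENNReal.ofReal (1 + ‖x‖)) ^ (-(t*q + N)) * (‖u x‖₊ : ℝ≥0∞) ^ q) ≤
        C * (∑' j : ℕ, ENNReal.ofReal (((j : ℝ) + 1) ^ (-((t - s)*q + 1)))) *
          (⨆ R : {R : ℝ // 1 ≤ R},
            ENNReal.ofReal ((R : ℝ) ^ (-(s + N/q))) *
              (∫⁻ x in ball (0 : Euc N) (R : ℝ), (‖u x‖₊ : ℝ≥0∞) ^ q) ^ (1/q)) ^ q) ∧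
      ((⨆ R : {R : ℝ // 1 ≤ R},
          ENNReal.ofReal ((R : ℝ) ^ (-(s + N/q))) *
            (∫⁻ x in ball (0 : Euc N) (R : ℝ), (‖u x‖₊ : ℝ≥0∞) ^ q) ^ (1/q)) < ⊤ →
        (∫⁻ x : Euc N, (ENNReal.ofReal (1 + ‖x‖)) ^ (-(t*q + N)) * (‖u x‖₊ : ℝ≥0∞) ^ q) < ⊤) := by
  classical
  have hq0 : (0:ℝ) < q := lt_of_lt_of_le one_pos hq
  have hqne : q ≠ 0 := ne_of_gt hq0
  have hsq : -(N:ℝ) ≤ s * q := by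
    have h := mul_le_mul_of_nonneg_right hs hq0.le
    rw [neg_mul, div_mul_cancel₀ _ hqne] at h
    linarith
  have ha : 0 < (t - s) * q := mul_pos (by linarith) hq0
  have hp : 0 < t * q + N := by nlinarith [mul_lt_mul_of_pos_right hst hq0]
  have hr1 : ENNReal.ofReal ((2:ℝ) ^ (-((t-s)*q))) < 1 :=
    ENNReal.ofReal_lt_one.2 (Real.rpow_lt_one_of_one_lt_of_neg one_lt_two (by linarith))
  set r : ℝ≥0∞ := ENNReal.ofReal ((2:ℝ) ^ (-((t-s)*q))) with hr
  set C0 : ℝ≥0∞ := ENNReal.ofReal ((2:ℝ) ^ (s*q+N)) * (1 - r)⁻¹ with hC0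
  have hC0top : C0 ≠ ⊤ := by
    refine ENNReal.mul_ne_top ENNReal.ofReal_ne_top ?_
    rw [Ne, ENNReal.inv_eq_top, tsub_eq_zero_iff_le]
    exact hr1.not_ge
  refine ⟨C0, hC0top, ?_⟩
  intro u hu
  set M : ℝ≥0∞ := ⨆ R : {R : ℝ // 1 ≤ R},
      ENNReal.ofReal ((R : ℝ) ^ (-(s + N/q))) *
        (∫⁻ x in ball (0 : Euc N) (R : ℝ), (‖u x‖₊ : ℝ≥0∞) ^ q) ^ (1/q) with hMdef
  have key : ∀ R : ℝ, 1 ≤ R →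
      (∫⁻ x in ball (0 : Euc N) R, (‖u x‖₊ : ℝ≥0∞) ^ q) ≤ ENNReal.ofReal (R ^ (s*q+N)) * M ^ q := by
    intro R hR
    have hRpos : (0:ℝ) < R := lt_of_lt_of_le one_pos hR
    have h1 : ENNReal.ofReal (R ^ (-(s + N/q))) *
        (∫⁻ x in ball (0 : Euc N) R, (‖u x‖₊ : ℝ≥0∞) ^ q) ^ (1/q) ≤ M :=
      le_iSup (fun R : {R : ℝ // 1 ≤ R} => ENNReal.ofReal ((R:ℝ) ^ (-(s + N/q))) *
        (∫⁻ x in ball (0 : Euc N) (R:ℝ), (‖u x‖₊ : ℝ≥0∞) ^ q) ^ (1/q)) (⟨R, hR⟩ : {R : ℝ // 1 ≤ R})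
    have h2 := ENNReal.rpow_le_rpow h1 hq0.le
    rw [ENNReal.mul_rpow_of_nonneg _ _ hq0.le, ← ENNReal.rpow_mul, one_div,
      inv_mul_cancel₀ hqne, ENNReal.rpow_one,
      ENNReal.ofReal_rpow_of_pos (Real.rpow_pos_of_pos hRpos _),
      ← Real.rpow_mul hRpos.le] at h2
    have hexp : -(s + ↑N/q) * q = -(s*q+N) := by field_simp
    rw [hexp] at h2
    calc (∫⁻ x in ball (0 : Euc N) R, (‖u x‖₊ : ℝ≥0∞) ^ q)
        = ENNReal.ofReal (R ^ (s*q+N)) *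
          (ENNReal.ofReal (R ^ (-(s*q+N))) * ∫⁻ x in ball (0 : Euc N) R, (‖u x‖₊ : ℝ≥0∞) ^ q) := by
          rw [← mul_assoc, ← ENNReal.ofReal_mul (Real.rpow_nonneg hRpos.le _),
            ← Real.rpow_add hRpos, add_neg_cancel, Real.rpow_zero, ENNReal.ofReal_one, one_mul]
      _ ≤ _ := mul_le_mul_right h2 _
  set Sk : ℕ → Set (Euc N) := fun k => ball (0:Euc N) ((2:ℝ)^(k+1)) \ ball (0:Euc N) ((2:ℝ)^k - 1)
    with hSkdef
  have hSkm : ∀ k, MeasurableSet (Sk k) := fun k => measurableSet_ball.diff measurableSet_ball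
  have hcover : (Set.univ : Set (Euc N)) ⊆ ⋃ k, Sk k := by
    intro x _
    have hex : ∃ n : ℕ, ‖x‖ < 2 ^ n := pow_unbounded_of_one_lt ‖x‖ one_lt_two
    refine Set.mem_iUnion.2 ?_
    obtain ⟨n, hspec, hmin⟩ : ∃ n : ℕ, ‖x‖ < 2 ^ n ∧ ∀ m, m < n → ¬ ‖x‖ < 2 ^ m :=
      ⟨Nat.find hex, Nat.find_spec hex, fun m hm => Nat.find_min hex hm⟩
    cases n with
    | zero =>
      refine ⟨0, mem_ball_zero_iff.2 ?_, fun hmem => ?_⟩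
      · have h01 : (2:ℝ)^(0:ℕ) < 2^(0+1) := by norm_num
        linarith
      · have h1 := mem_ball_zero_iff.1 hmem
        have h2 : (2:ℝ)^(0:ℕ) - 1 = 0 := by norm_num
        have h3 := norm_nonneg x
        rw [h2] at h1
        linarith
    | succ m =>
      have h2m : (2:ℝ)^m ≤ ‖x‖ := not_lt.1 (hmin m (Nat.lt_succ_self m))
      refine ⟨m, mem_ball_zero_iff.2 hspec, fun hmem => ?_⟩
      have h1 := mem_ball_zero_iff.1 hmem
      linarith
  have hterm : ∀ k : ℕ,
      (∫⁻ x in Sk k, (ENNReal.ofReal (1 + ‖x‖)) ^ (-(t*q + N)) * (‖u x‖₊ : ℝ≥0∞) ^ q)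
      ≤ ENNReal.ofReal ((2:ℝ)^(s*q+N)) * r ^ k * M ^ q := by
    intro k
    have hb : (0:ℝ) < 2^k := by positivity
    have step1 : (∫⁻ x in Sk k, (ENNReal.ofReal (1 + ‖x‖)) ^ (-(t*q + N)) * (‖u x‖₊ : ℝ≥0∞) ^ q)
        ≤ ENNReal.ofReal (((2:ℝ)^k) ^ (-(t*q+N))) * ∫⁻ x in Sk k, (‖u x‖₊ : ℝ≥0∞) ^ q := by
      rw [← lintegral_const_mul' _ _ ENNReal.ofReal_ne_top]
      refine lintegral_mono_ae ((ae_restrict_mem (hSkm k)).mono fun x hx => ?_)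
      have hx2 : (2:ℝ)^k ≤ 1 + ‖x‖ := by
        have h := hx.2
        rw [mem_ball_zero_iff] at h
        push_neg at h
        linarith
      have hmono : (ENNReal.ofReal (1 + ‖x‖)) ^ (-(t*q+N)) ≤ (ENNReal.ofReal ((2:ℝ)^k)) ^ (-(t*q+N)) := by
        rw [ENNReal.rpow_neg, ENNReal.rpow_neg]
        exact ENNReal.inv_le_inv.2 (ENNReal.rpow_le_rpow (ENNReal.ofReal_le_ofReal hx2) hp.le)
      rw [ENNReal.ofReal_rpow_of_pos hb] at hmono
      exact mul_le_mul_left hmono _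
    have step2 : (∫⁻ x in Sk k, (‖u x‖₊ : ℝ≥0∞) ^ q)
        ≤ ENNReal.ofReal (((2:ℝ)^(k+1)) ^ (s*q+N)) * M ^ q :=
      le_trans (lintegral_mono_set Set.diff_subset) (key _ (one_le_pow₀ one_le_two))
    have hc : ((2:ℝ)^k : ℝ) ^ (-(t*q+N)) * ((2:ℝ)^(k+1)) ^ (s*q+N)
        = (2:ℝ)^(s*q+N) * ((2:ℝ) ^ (-((t-s)*q)))^k := by
      rw [← Real.rpow_natCast (2:ℝ) k, ← Real.rpow_natCast (2:ℝ) (k+1),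
        ← Real.rpow_natCast ((2:ℝ) ^ (-((t-s)*q))) k,
        ← Real.rpow_mul (by norm_num : (0:ℝ) ≤ 2), ← Real.rpow_mul (by norm_num : (0:ℝ) ≤ 2),
        ← Real.rpow_mul (by norm_num : (0:ℝ) ≤ 2),
        ← Real.rpow_add (by norm_num : (0:ℝ) < 2), ← Real.rpow_add (by norm_num : (0:ℝ) < 2)]
      congr 1
      push_cast
      ring
    calc (∫⁻ x in Sk k, (ENNReal.ofReal (1 + ‖x‖)) ^ (-(t*q + N)) * (‖u x‖₊ : ℝ≥0∞) ^ q)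
        ≤ ENNReal.ofReal (((2:ℝ)^k) ^ (-(t*q+N))) *
            (ENNReal.ofReal (((2:ℝ)^(k+1)) ^ (s*q+N)) * M ^ q) :=
          le_trans step1 (mul_le_mul_right step2 _)
      _ = ENNReal.ofReal ((2:ℝ)^(s*q+N)) * r ^ k * M ^ q := by
          rw [← mul_assoc, ← ENNReal.ofReal_mul (Real.rpow_nonneg hb.le _), hc,
            ENNReal.ofReal_mul (Real.rpow_nonneg (by norm_num) _), hr,
            ← ENNReal.ofReal_pow (Real.rpow_nonneg (by norm_num) _)]
  have hS1 : (1:ℝ≥0∞) ≤ ∑' j : ℕ, ENNReal.ofReal (((j:ℝ)+1) ^ (-((t-s)*q+1))) := by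
    have h0 := ENNReal.le_tsum (f := fun j : ℕ => ENNReal.ofReal (((j:ℝ)+1) ^ (-((t-s)*q+1)))) 0
    simpa using h0
  have hmain : (∫⁻ x : Euc N, (ENNReal.ofReal (1 + ‖x‖)) ^ (-(t*q + N)) * (‖u x‖₊ : ℝ≥0∞) ^ q) ≤
      C0 * (∑' j : ℕ, ENNReal.ofReal (((j : ℝ) + 1) ^ (-((t - s)*q + 1)))) * M ^ q := by
    calc (∫⁻ x : Euc N, (ENNReal.ofReal (1 + ‖x‖)) ^ (-(t*q + N)) * (‖u x‖₊ : ℝ≥0∞) ^ q)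
        = ∫⁻ x in Set.univ, (ENNReal.ofReal (1 + ‖x‖)) ^ (-(t*q + N)) * (‖u x‖₊ : ℝ≥0∞) ^ q :=
          (setLIntegral_univ _).symm
      _ ≤ ∫⁻ x in ⋃ k, Sk k, (ENNReal.ofReal (1 + ‖x‖)) ^ (-(t*q + N)) * (‖u x‖₊ : ℝ≥0∞) ^ q :=
          lintegral_mono_set hcover
      _ ≤ ∑' k, ∫⁻ x in Sk k, (ENNReal.ofReal (1 + ‖x‖)) ^ (-(t*q + N)) * (‖u x‖₊ : ℝ≥0∞) ^ q :=
          lintegral_iUnion_le _ _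
      _ ≤ ∑' k, ENNReal.ofReal ((2:ℝ)^(s*q+N)) * r ^ k * M ^ q := ENNReal.tsum_le_tsum hterm
      _ = C0 * M ^ q := by
          rw [ENNReal.tsum_mul_right, ENNReal.tsum_mul_left, ENNReal.tsum_geometric, hC0, mul_assoc]
      _ = C0 * 1 * M ^ q := by rw [mul_one]
      _ ≤ C0 * (∑' j : ℕ, ENNReal.ofReal (((j : ℝ) + 1) ^ (-((t - s)*q + 1)))) * M ^ q :=
          mul_le_mul' (mul_le_mul_right hS1 _) le_rfl
  refine ⟨hmain, fun hMfin => ?_⟩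
  refine lt_of_le_of_lt hmain ?_
  have hSfin : (∑' j : ℕ, ENNReal.ofReal (((j:ℝ)+1) ^ (-((t-s)*q+1)))) ≠ ⊤ := by
    have hsum : Summable (fun j : ℕ => ((j:ℝ)+1) ^ (-((t-s)*q+1))) := by
      have h1 : Summable (fun j : ℕ => ((j:ℝ)) ^ (-((t-s)*q+1))) :=
        Real.summable_nat_rpow.2 (by linarith)
      have h2 := (summable_nat_add_iff 1).2 h1
      refine h2.congr fun j => ?_
      push_cast
      ring_nf
    rw [← ENNReal.ofReal_tsum_of_nonneg (fun j => Real.rpow_nonneg (by positivity) _) hsum]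
    exact ENNReal.ofReal_ne_top
  exact ENNReal.mul_lt_top (ENNReal.mul_lt_top hC0top.lt_top hSfin.lt_top)
    (ENNReal.rpow_lt_top_of_nonneg hq0.le hMfin.ne)
end
end

section
/- A polynomial u on ℝ^N belongs to M^{s,q} if and only if deg u ≤ s, and belongs to M₀^{s,q} if and only if deg u < s. In particular, if u is a polynomial of degree d, then for every sector Σ_ε := {x : |x'| < ε x₁} (in coordinates where the leading term is a_d x₁^d, a_d ≠ 0) and ε small, there are c > 0 and R₀ such that ∫_{Σ_ε ∩ B_R} |u| ≥ c R^{d+N}(1 - (R₀/R)^{d+N}) for R > R₀, forcing R^{-s-N}‖u‖_{L¹(B_R)} to be unbounded when s < d. -/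
open MeasureTheory Metric Filter ENNReal

noncomputable section

namespace Aux
open MvPolynomial Pointwise

variable {N : ℕ}

lemma continuous_evalPoly (P : MvPolynomial (Fin N) ℂ) : Continuous (evalPoly P) :=
  (MvPolynomial.continuous_eval P).comp
    (continuous_pi fun i => Complex.continuous_ofReal.comp (EuclideanSpace.proj i).continuous)

lemma integrableOn_ball (f : Euc N → ℝ) (hf : Continuous f) (R : ℝ) :
    IntegrableOn f (ball (0 : Euc N) R) volume :=
  (hf.continuousOn.integrableOn_compact (isCompact_closedBall 0 R)).mono_set
    ball_subset_closedBall

lemma coord_abs_le_norm (x : Euc N) (i : Fin N) : |x i| ≤ ‖x‖ := by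
  rw [EuclideanSpace.norm_eq]
  rw [show |x i| = Real.sqrt (‖x i‖ ^ 2) by
    rw [Real.sqrt_sq_eq_abs]; simp [Real.norm_eq_abs]]
  apply Real.sqrt_le_sqrt
  exact Finset.single_le_sum (f := fun j => ‖x j‖ ^ 2)
    (fun j _ => sq_nonneg _) (Finset.mem_univ i)

lemma evalPoly_norm_le (P : MvPolynomial (Fin N) ℂ) {R : ℝ} (hR : 1 ≤ R) {x : Euc N}
    (hx : ‖x‖ ≤ R) :
    ‖evalPoly P x‖ ≤ (∑ m ∈ P.support, ‖P.coeff m‖) * R ^ P.totalDegree := by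
  have hR0 : (0:ℝ) ≤ R := le_trans zero_le_one hR
  rw [evalPoly, eval_eq', Finset.sum_mul]
  refine (norm_sum_le _ _).trans (Finset.sum_le_sum fun m hm => ?_)
  rw [norm_mul]
  have h1 : ‖∏ i, ((x i : ℂ)) ^ m i‖ ≤ R ^ P.totalDegree := by
    rw [norm_prod]
    calc ∏ i, ‖(x i : ℂ) ^ m i‖ ≤ ∏ i, R ^ m i := by
          refine Finset.prod_le_prod (fun i _ => norm_nonneg _) fun i _ => ?_
          rw [norm_pow]
          refine pow_le_pow_left₀ (norm_nonneg _) ?_ _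
          rw [Complex.norm_real, Real.norm_eq_abs]
          exact (coord_abs_le_norm x i).trans hx
      _ = R ^ (∑ i, m i) := by rw [Finset.prod_pow_eq_pow_sum]
      _ ≤ R ^ P.totalDegree := by
          apply pow_le_pow_right₀ hR
          calc ∑ i, m i = ∑ i ∈ m.support, m i := by
                refine (Finset.sum_subset (Finset.subset_univ _) fun i _ hi => ?_).symm
                simpa using hi
            _ ≤ P.totalDegree := le_totalDegree hm
  calc ‖coeff m P‖ * ‖∏ i, ((x i:ℂ)) ^ m i‖ ≤ ‖coeff m P‖ * (R ^ P.totalDegree) := by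
        exact mul_le_mul_of_nonneg_left h1 (norm_nonneg _)
    _ = _ := rfl

lemma coeff_sum_monomial (s : Finset (Fin N →₀ ℕ)) (c : (Fin N →₀ ℕ) → ℝ)
    (m : Fin N →₀ ℕ) :
    MvPolynomial.coeff m (∑ m' ∈ s, monomial m' (c m')) = if m ∈ s then c m else 0 := by
  rw [MvPolynomial.coeff_sum]
  simp_rw [coeff_monomial]
  exact Finset.sum_ite_eq' s m c

/-- A complex polynomial vanishing at all real points is zero. -/
lemma eq_zero_of_forall_real (Q : MvPolynomial (Fin N) ℂ)
    (h : ∀ x : Fin N → ℝ, eval (fun i => (x i : ℂ)) Q = 0) : Q = 0 := by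
  set A : MvPolynomial (Fin N) ℝ := ∑ m ∈ Q.support, monomial m ((Q.coeff m).re) with hA
  set B : MvPolynomial (Fin N) ℝ := ∑ m ∈ Q.support, monomial m ((Q.coeff m).im) with hB
  have key : ∀ x : Fin N → ℝ,
      ((eval x A : ℝ) : ℂ) + (eval x B : ℝ) * Complex.I = eval (fun i => (x i : ℂ)) Q := by
    intro x
    rw [hA, hB]
    rw [show (eval (fun i => (x i : ℂ)) Q) =
        eval (fun i => (x i : ℂ)) (∑ m ∈ Q.support, monomial m (Q.coeff m)) by
      rw [support_sum_monomial_coeff]]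
    simp only [map_sum, eval_monomial]
    rw [Complex.ofReal_sum, Complex.ofReal_sum, Finset.sum_mul, ← Finset.sum_add_distrib]
    refine Finset.sum_congr rfl fun m _ => ?_
    have hprod : (Finsupp.prod m fun i e => ((x i : ℂ)) ^ e)
        = ((Finsupp.prod m fun i e => (x i) ^ e : ℝ) : ℂ) := by
      rw [Finsupp.prod, Finsupp.prod, Complex.ofReal_prod]
      push_cast; rfl
    rw [hprod]
    set r : ℝ := Finsupp.prod m fun i e => (x i) ^ e
    push_cast
    simp [Complex.ext_iff, Complex.mul_re, Complex.mul_im, Complex.add_re, Complex.add_im]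
  have hA0 : A = 0 := by
    apply MvPolynomial.funext
    intro x
    have := key x
    rw [h x] at this
    have h2 := congrArg Complex.re this
    simpa using h2
  have hB0 : B = 0 := by
    apply MvPolynomial.funext
    intro x
    have := key x
    rw [h x] at this
    have h2 := congrArg Complex.im this
    simpa using h2
  ext m
  have hAc := congrArg (MvPolynomial.coeff m) hA0
  have hBc := congrArg (MvPolynomial.coeff m) hB0
  rw [hA, coeff_sum_monomial] at hAc
  rw [hB, coeff_sum_monomial] at hBc
  simp only [coeff_zero] at hAc hBc
  by_cases hm : m ∈ Q.support
  · rw [if_pos hm] at hAc hBc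
    exact Complex.ext (by simpa using hAc) (by simpa using hBc)
  · simpa using mem_support_iff.not_left.mp hm

lemma eq_zero_of_vanish_ball (Q : MvPolynomial (Fin N) ℂ)
    (h : ∀ y ∈ ball (0 : Euc N) 1, evalPoly Q y = 0) : Q = 0 := by
  apply eq_zero_of_forall_real
  intro x
  set y0 : Euc N := (EuclideanSpace.equiv (Fin N) ℝ).symm x with hy0def
  have hy0 : ∀ i, y0 i = x i := fun i => rfl
  set g : Polynomial ℂ :=
    MvPolynomial.eval₂ (Polynomial.C) (fun i => Polynomial.C (x i : ℂ) * Polynomial.X) Q with hg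
  have hgeval : ∀ t : ℂ, g.eval t = MvPolynomial.eval (fun i => (x i : ℂ) * t) Q := by
    intro t
    rw [show g.eval t = (Polynomial.evalRingHom t) g from rfl, hg, eval₂_comp_left]
    rw [show ((Polynomial.evalRingHom t).comp (Polynomial.C : ℂ →+* Polynomial ℂ))
        = RingHom.id ℂ by ext z; simp]
    simp only [eval₂_id]
    have hfun : (⇑(Polynomial.evalRingHom t) ∘ fun i => Polynomial.C (x i : ℂ) * Polynomial.X)
        = fun i => (x i : ℂ) * t := by funext i; simp
    rw [hfun]
  set ε : ℝ := 1 / (‖y0‖ + 1) with hε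
  have hyn : 0 ≤ ‖y0‖ := norm_nonneg _
  have hεpos : 0 < ε := by positivity
  have hroots : ∀ t : ℝ, t ∈ Set.Ioo 0 ε → g.IsRoot (t : ℂ) := by
    intro t ht
    have hmem : (t • y0) ∈ ball (0 : Euc N) 1 := by
      rw [mem_ball_zero_iff, norm_smul, Real.norm_eq_abs, abs_of_pos ht.1]
      calc t * ‖y0‖ ≤ t * (‖y0‖ + 1) := by nlinarith [ht.1]
        _ < ε * (‖y0‖ + 1) := by nlinarith [ht.2]
        _ = 1 := by rw [hε]; exact one_div_mul_cancel (by positivity)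
    have := h _ hmem
    rw [evalPoly] at this
    rw [Polynomial.IsRoot, hgeval,
      show (fun i => ((x i : ℂ) * (t : ℂ))) = (fun i => (((t • y0) i : ℝ) : ℂ)) from
        funext fun i => by rw [show (t • y0) i = t * y0 i from rfl, hy0 i]; push_cast; ring]
    exact this
  have hg0 : g = 0 := by
    apply Polynomial.eq_zero_of_infinite_isRoot
    apply Set.Infinite.mono (s := (fun t : ℝ => (t : ℂ)) '' (Set.Ioo 0 ε))
    · rintro z ⟨t, ht, rfl⟩
      exact hroots t ht
    · exact (Set.Ioo_infinite hεpos).image (Complex.ofReal_injective.injOn)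
  have := hgeval 1
  rw [hg0] at this
  simp only [Polynomial.eval_zero, mul_one] at this
  exact this.symm

lemma integral_pos (Q : MvPolynomial (Fin N) ℂ) (hQ : Q ≠ 0) :
    0 < ∫ y in ball (0 : Euc N) 1, ‖evalPoly Q y‖ := by
  rw [setIntegral_pos_iff_support_of_nonneg_ae
    (Filter.Eventually.of_forall fun y => norm_nonneg _)
    (integrableOn_ball _ (continuous_evalPoly Q).norm _)]
  obtain ⟨y, hy, hne⟩ : ∃ y ∈ ball (0 : Euc N) 1, evalPoly Q y ≠ 0 := by
    by_contra hc; push_neg at hc; exact hQ (eq_zero_of_vanish_ball Q hc)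
  have hopen : IsOpen ((evalPoly Q) ⁻¹' {0}ᶜ ∩ ball (0 : Euc N) 1) :=
    ((isOpen_compl_singleton).preimage (continuous_evalPoly Q)).inter isOpen_ball
  refine lt_of_lt_of_le (hopen.measure_pos volume ⟨y, hne, hy⟩) (measure_mono ?_)
  rintro z ⟨hz1, hz2⟩
  exact ⟨by simpa using hz1, hz2⟩

lemma eval_mul_of_isHomogeneous (Q : MvPolynomial (Fin N) ℂ) (n : ℕ)
    (h : Q.IsHomogeneous n) (c : ℂ) (z : Fin N → ℂ) :
    eval (fun i => c * z i) Q = c ^ n * eval z Q := by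
  rw [eval_eq', eval_eq', Finset.mul_sum]
  refine Finset.sum_congr rfl fun m hm => ?_
  have hd : m.degree = n := by
    by_contra hne
    exact mem_support_iff.mp hm (h.coeff_eq_zero hne)
  have hsum : ∑ i, m i = n := by
    rw [← hd, Finsupp.degree]
    exact (Finset.sum_subset (Finset.subset_univ _) fun i _ hi => by
      simpa using hi).symm
  simp_rw [mul_pow]
  rw [Finset.prod_mul_distrib, Finset.prod_pow_eq_pow_sum, hsum]
  ring

lemma homogeneousComponent_totalDegree_ne_zero (P : MvPolynomial (Fin N) ℂ) (hP : P ≠ 0) :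
    homogeneousComponent P.totalDegree P ≠ 0 := by
  obtain ⟨m, hm, hdeg⟩ : ∃ m ∈ P.support, (m.sum fun _ e => e) = P.totalDegree := by
    have hne : P.support.Nonempty := support_nonempty.mpr hP
    obtain ⟨m, hm, hEq⟩ := Finset.exists_mem_eq_sup P.support hne fun m => m.sum fun _ e => e
    exact ⟨m, hm, by rw [totalDegree, hEq]⟩
  intro hzero
  have := congrArg (MvPolynomial.coeff m) hzero
  rw [coeff_homogeneousComponent] at this
  rw [if_pos (by change (∑ i ∈ m.support, m i) = _; simpa [Finsupp.sum] using hdeg)] at this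
  simp only [coeff_zero] at this
  exact mem_support_iff.mp hm this

/-- Scaling: `∫_{B_R} ‖P‖ = R^N ∫_{B_1} ‖P(R y)‖ dy`. -/
lemma scaling_integral (f : Euc N → ℝ) {R : ℝ} (hR : 0 < R) :
    ∫ x in ball (0 : Euc N) R, f x
      = R ^ N * ∫ y in ball (0 : Euc N) 1, f (R • y) := by
  have h := Measure.setIntegral_comp_smul_of_pos (volume : Measure (Euc N)) f
    (ball (0 : Euc N) 1) hR
  have hball : R • ball (0 : Euc N) 1 = ball (0 : Euc N) R := by
    rw [smul_ball hR.ne' (0 : Euc N) 1, smul_zero, Real.norm_eq_abs, abs_of_pos hR, mul_one]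
  rw [hball] at h
  rw [h, smul_eq_mul, finrank_euclideanSpace_fin, ← mul_assoc, mul_inv_cancel₀ (by positivity),
    one_mul]


lemma lower_bound (P : MvPolynomial (Fin N) ℂ) (hP : P ≠ 0) :
    ∃ c : ℝ, 0 < c ∧ ∃ R₀ : ℝ, 1 ≤ R₀ ∧ ∀ R : ℝ, R₀ ≤ R →
      c * R ^ (P.totalDegree + N) ≤ ∫ x in ball (0 : Euc N) R, ‖evalPoly P x‖ := by
  classical
  set d := P.totalDegree with hd
  set Pd := homogeneousComponent d P with hPddef
  have hPd : Pd ≠ 0 := homogeneousComponent_totalDegree_ne_zero P hP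
  set c₁ : ℝ := ∫ y in ball (0 : Euc N) 1, ‖evalPoly Pd y‖ with hc₁def
  have hc₁ : 0 < c₁ := integral_pos Pd hPd
  set K : ℝ := ∑ m ∈ Finset.range d,
    ∫ y in ball (0 : Euc N) 1, ‖evalPoly (homogeneousComponent m P) y‖ with hKdef
  have hK0 : 0 ≤ K := Finset.sum_nonneg fun m _ =>
    setIntegral_nonneg measurableSet_ball fun y _ => norm_nonneg _
  refine ⟨c₁ / 2, by positivity, max 1 (2 * K / c₁), le_max_left _ _, fun R hR => ?_⟩
  have hR1 : (1 : ℝ) ≤ R := le_trans (le_max_left _ _) hR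
  have hRpos : (0 : ℝ) < R := lt_of_lt_of_le one_pos hR1
  have hRK : K / R ≤ c₁ / 2 := by
    rcases le_or_gt K 0 with h | h
    · calc K / R ≤ 0 := div_nonpos_of_nonpos_of_nonneg h hRpos.le
        _ ≤ c₁ / 2 := by positivity
    · have h2 : 2 * K / c₁ ≤ R := le_trans (le_max_right _ _) hR
      rw [div_le_div_iff₀ hRpos (by norm_num)]
      rw [div_le_iff₀ hc₁] at h2
      nlinarith
  -- decomposition
  have hdecomp : ∀ y : Euc N, evalPoly P (R • y) =
      ∑ m ∈ Finset.range (d + 1), (R : ℂ) ^ m * evalPoly (homogeneousComponent m P) y := by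
    intro y
    have hcoord : (fun i => (((R • y) i : ℝ) : ℂ)) = fun i => (R : ℂ) * ((y i : ℝ) : ℂ) := by
      funext i
      rw [show (R • y) i = R * y i from rfl]
      push_cast; ring
    rw [evalPoly, hcoord]
    conv_lhs => rw [← sum_homogeneousComponent P]
    rw [map_sum]
    exact Finset.sum_congr rfl fun m _ =>
      eval_mul_of_isHomogeneous _ m (homogeneousComponent_isHomogeneous m P) _ _
  -- pointwise lower bound
  have hpoint : ∀ y : Euc N,
      R ^ d * ‖evalPoly Pd y‖ -
        ∑ m ∈ Finset.range d, R ^ m * ‖evalPoly (homogeneousComponent m P) y‖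
      ≤ ‖evalPoly P (R • y)‖ := by
    intro y
    rw [hdecomp y, Finset.sum_range_succ]
    set S := ∑ m ∈ Finset.range d, (R : ℂ) ^ m * evalPoly (homogeneousComponent m P) y with hS
    set T := (R : ℂ) ^ d * evalPoly Pd y with hT
    have hTnorm : ‖T‖ = R ^ d * ‖evalPoly Pd y‖ := by
      rw [hT, norm_mul, norm_pow, Complex.norm_real, Real.norm_eq_abs, abs_of_pos hRpos]
    have hSnorm : ‖S‖ ≤ ∑ m ∈ Finset.range d, R ^ m * ‖evalPoly (homogeneousComponent m P) y‖ := by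
      refine (norm_sum_le _ _).trans (Finset.sum_le_sum fun m _ => ?_)
      rw [norm_mul, norm_pow, Complex.norm_real, Real.norm_eq_abs, abs_of_pos hRpos]
    have htri : ‖T‖ - ‖S‖ ≤ ‖S + T‖ := by
      have h := norm_sub_le (S + T) S
      rw [add_sub_cancel_left] at h
      linarith
    calc R ^ d * ‖evalPoly Pd y‖ -
          ∑ m ∈ Finset.range d, R ^ m * ‖evalPoly (homogeneousComponent m P) y‖
        ≤ ‖T‖ - ‖S‖ := by rw [hTnorm]; linarith
      _ ≤ ‖S + T‖ := htri
  -- integrate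
  have hcont : ∀ m : ℕ, Continuous fun y : Euc N => ‖evalPoly (homogeneousComponent m P) y‖ :=
    fun m => (continuous_evalPoly _).norm
  have hint1 : IntegrableOn (fun y : Euc N => ‖evalPoly P (R • y)‖) (ball (0:Euc N) 1) volume :=
    integrableOn_ball _ ((continuous_evalPoly P).norm.comp (continuous_const_smul R)) 1
  have hint2 : IntegrableOn (fun y : Euc N =>
      R ^ d * ‖evalPoly Pd y‖ -
        ∑ m ∈ Finset.range d, R ^ m * ‖evalPoly (homogeneousComponent m P) y‖)
      (ball (0:Euc N) 1) volume := by
    apply Integrable.sub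
    · exact (integrableOn_ball _ (hcont d) 1).const_mul _
    · apply integrable_finset_sum
      intro m _
      exact (integrableOn_ball _ (hcont m) 1).const_mul _
  have hmono : R ^ d * c₁ - (∑ m ∈ Finset.range d,
        R ^ m * ∫ y in ball (0:Euc N) 1, ‖evalPoly (homogeneousComponent m P) y‖)
      ≤ ∫ y in ball (0:Euc N) 1, ‖evalPoly P (R • y)‖ := by
    have := integral_mono hint2 hint1 fun y => hpoint y
    rw [integral_sub ((integrableOn_ball _ (hcont d) 1).const_mul _)
        (integrable_finset_sum _ fun m _ => (integrableOn_ball _ (hcont m) 1).const_mul _),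
      integral_const_mul, integral_finset_sum _ fun m _ =>
        (integrableOn_ball _ (hcont m) 1).const_mul _] at this
    simp_rw [integral_const_mul] at this
    exact this
  have hsumle : (∑ m ∈ Finset.range d,
        R ^ m * ∫ y in ball (0:Euc N) 1, ‖evalPoly (homogeneousComponent m P) y‖)
      ≤ R ^ d / R * K := by
    rw [hKdef, Finset.mul_sum]
    refine Finset.sum_le_sum fun m hm => ?_
    have hKm : 0 ≤ ∫ y in ball (0:Euc N) 1, ‖evalPoly (homogeneousComponent m P) y‖ :=
      setIntegral_nonneg measurableSet_ball fun y _ => norm_nonneg _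
    refine mul_le_mul_of_nonneg_right ?_ hKm
    rw [le_div_iff₀ hRpos, ← pow_succ]
    exact pow_le_pow_right₀ hR1 (Finset.mem_range.mp hm)
  have hmain : c₁ / 2 * R ^ d ≤ ∫ y in ball (0:Euc N) 1, ‖evalPoly P (R • y)‖ := by
    have h1 : R ^ d / R * K ≤ R ^ d * (c₁ / 2) := by
      have heq : R ^ d / R * K = R ^ d * (K / R) := by ring
      rw [heq]
      exact mul_le_mul_of_nonneg_left hRK (by positivity)
    calc c₁ / 2 * R ^ d = R ^ d * c₁ - R ^ d * (c₁ / 2) := by ring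
      _ ≤ R ^ d * c₁ - R ^ d / R * K := by linarith
      _ ≤ _ := by linarith [hmono, hsumle]
  have hscale := scaling_integral (fun x => ‖evalPoly P x‖) hRpos
  rw [hscale, pow_add]
  calc c₁ / 2 * (R ^ d * R ^ N) = R ^ N * (c₁ / 2 * R ^ d) := by ring
    _ ≤ R ^ N * ∫ y in ball (0:Euc N) 1, ‖evalPoly P (R • y)‖ := by
        refine mul_le_mul_of_nonneg_left hmain (by positivity)



lemma nontrivial_euc (hN : 0 < N) : Nontrivial (Euc N) := by
  have : Module.finrank ℝ (Euc N) = N := finrank_euclideanSpace_fin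
  exact Module.nontrivial_of_finrank_pos (R := ℝ) (by omega)

lemma volume_ball_euc (hN : 0 < N) {R : ℝ} (hR : 0 ≤ R) :
    volume (ball (0 : Euc N) R)
      = ENNReal.ofReal (R ^ N) * volume (ball (0 : Euc N) 1) := by
  haveI := nontrivial_euc hN
  rw [Measure.addHaar_ball _ _ hR, finrank_euclideanSpace_fin]

lemma eLpNorm_ball_le (hN : 0 < N) (P : MvPolynomial (Fin N) ℂ) (q : ℝ≥0∞) :
    ∃ C : ℝ≥0∞, C ≠ ⊤ ∧ ∀ R : ℝ, 1 ≤ R →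
      eLpNorm (evalPoly P) q (volume.restrict (ball (0 : Euc N) R)) ≤
        C * ENNReal.ofReal (R ^ ((P.totalDegree : ℝ) + N / q.toReal)) := by
  set d := P.totalDegree with hd
  set K : ℝ := ∑ m ∈ P.support, ‖P.coeff m‖ with hKdef
  have hK0 : 0 ≤ K := Finset.sum_nonneg fun m _ => norm_nonneg _
  have hv1top : volume (ball (0 : Euc N) 1) ≠ ⊤ := measure_ball_lt_top.ne
  set t : ℝ := q.toReal⁻¹ with ht
  have ht0 : 0 ≤ t := by positivity
  refine ⟨ENNReal.ofReal K * (volume (ball (0 : Euc N) 1)) ^ t, ?_, fun R hR => ?_⟩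
  · exact ENNReal.mul_ne_top ENNReal.ofReal_ne_top
      (ENNReal.rpow_ne_top_of_nonneg ht0 hv1top)
  have hR0 : (0:ℝ) < R := lt_of_lt_of_le one_pos hR
  have hbound : ∀ᵐ x ∂(volume.restrict (ball (0 : Euc N) R)),
      ‖evalPoly P x‖ ≤ K * R ^ d :=
    (ae_restrict_iff' measurableSet_ball).2 (Filter.Eventually.of_forall fun x hx =>
      evalPoly_norm_le P hR (le_of_lt (mem_ball_zero_iff.mp hx)))
  refine (eLpNorm_le_of_ae_bound hbound).trans ?_
  rw [Measure.restrict_apply_univ, volume_ball_euc hN hR0.le]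
  rw [ENNReal.mul_rpow_of_nonneg _ _ ht0,
    ENNReal.ofReal_rpow_of_pos (by positivity),
    ENNReal.ofReal_mul hK0]
  rw [show ENNReal.ofReal ((R ^ N) ^ t) * (volume (ball (0 : Euc N) 1)) ^ t * (ENNReal.ofReal K * ENNReal.ofReal (R ^ d))
      = (ENNReal.ofReal K * (volume (ball (0 : Euc N) 1)) ^ t) * (ENNReal.ofReal ((R ^ N) ^ t) * ENNReal.ofReal (R ^ d))
    by ring]
  rw [← ENNReal.ofReal_mul (by positivity)]
  refine mul_le_mul_right (le_of_eq (congrArg _ ?_)) _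
  rw [← Real.rpow_natCast R N, ← Real.rpow_natCast R d, ← Real.rpow_mul hR0.le,
    ← Real.rpow_add hR0]
  congr 1
  rw [div_eq_mul_inv]
  ring

lemma one_le_toReal_of_le {q : ℝ≥0∞} (hq : 1 ≤ q) (hqt : q ≠ ⊤) : 1 ≤ q.toReal := by
  rw [show (1:ℝ) = (1:ℝ≥0∞).toReal by simp]
  exact ENNReal.toReal_mono hqt hq

/-- key lower bound for the `M`-norm terms -/
lemma key_lower (hN : 0 < N) (P : MvPolynomial (Fin N) ℂ) (hP : P ≠ 0)
    (q : ℝ≥0∞) (hq : 1 ≤ q) (s : ℝ) :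
    ∃ c : ℝ, 0 < c ∧ ∃ B : ℝ≥0∞, B ≠ 0 ∧ B ≠ ⊤ ∧ ∃ R₀ : ℝ, 1 ≤ R₀ ∧ ∀ R : ℝ, R₀ ≤ R →
      ENNReal.ofReal c * ENNReal.ofReal (R ^ ((P.totalDegree : ℝ) - s)) ≤
        (ENNReal.ofReal (R ^ (-(s + N / q.toReal))) *
          eLpNorm (evalPoly P) q (volume.restrict (ball (0 : Euc N) R))) * B := by
  obtain ⟨c, hc, R₀, hR₀, hlow⟩ := lower_bound P hP
  set d := P.totalDegree with hd
  have hv1top : volume (ball (0 : Euc N) 1) ≠ ⊤ := measure_ball_lt_top.ne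
  have hv1pos : volume (ball (0 : Euc N) 1) ≠ 0 := (measure_ball_pos volume 0 one_pos).ne'
  set e : ℝ := 1 - 1 / q.toReal with he
  have he0 : 0 ≤ e := by
    rw [he, sub_nonneg]
    rcases eq_or_ne q ⊤ with hqt | hqt
    · simp [hqt]
    · have h1 := one_le_toReal_of_le hq hqt
      rw [div_le_one (by linarith)]; linarith
  set B : ℝ≥0∞ := (volume (ball (0 : Euc N) 1)) ^ e with hB
  have hBtop : B ≠ ⊤ := ENNReal.rpow_ne_top_of_nonneg he0 hv1top
  have hB0 : B ≠ 0 := by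
    intro h
    rw [hB, ENNReal.rpow_eq_zero_iff] at h
    rcases h with ⟨h1, _⟩ | ⟨h1, _⟩
    · exact hv1pos h1
    · exact hv1top h1
  refine ⟨c, hc, B, hB0, hBtop, R₀, hR₀, fun R hR => ?_⟩
  have hR1 : (1:ℝ) ≤ R := le_trans hR₀ hR
  have hR0 : (0:ℝ) < R := lt_of_lt_of_le one_pos hR1
  set μR := volume.restrict (ball (0 : Euc N) R) with hμR
  -- Step 1: L¹ lower bound
  have hint : Integrable (evalPoly P) μR := by
    have := integrableOn_ball (fun x => ‖evalPoly P x‖) (continuous_evalPoly P).norm R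
    exact (integrable_norm_iff ((continuous_evalPoly P).aestronglyMeasurable.restrict)).mp this
  have hL1 : ENNReal.ofReal (c * R ^ (d + N)) ≤ eLpNorm (evalPoly P) 1 μR := by
    rw [eLpNorm_one_eq_lintegral_enorm, ← ofReal_integral_norm_eq_lintegral_enorm hint]
    exact ENNReal.ofReal_le_ofReal (hlow R hR)
  -- Step 2: Hölder
  have hH : eLpNorm (evalPoly P) 1 μR ≤
      eLpNorm (evalPoly P) q μR * (μR Set.univ) ^ e := by
    have := eLpNorm_le_eLpNorm_mul_rpow_measure_univ (p := 1) (q := q) (μ := μR) hq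
      ((continuous_evalPoly P).aestronglyMeasurable.restrict)
    simpa [he] using this
  have hμuniv : μR Set.univ = ENNReal.ofReal (R ^ N) * volume (ball (0 : Euc N) 1) := by
    rw [hμR, Measure.restrict_apply_univ, volume_ball_euc hN hR0.le]
  rw [hμuniv, ENNReal.mul_rpow_of_nonneg _ _ he0,
    ENNReal.ofReal_rpow_of_pos (by positivity)] at hH
  -- Step 3: combine, multiplying by `ofReal (R ^ (-(s + N/q.toReal)))`
  set a : ℝ := (N : ℝ) / q.toReal with ha
  have hcancel_ne : ENNReal.ofReal ((R ^ N : ℝ) ^ e) ≠ 0 := by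
    simp only [ne_eq, ENNReal.ofReal_eq_zero, not_le]
    positivity
  have hchain :
      (ENNReal.ofReal (R ^ (-(s + a))) * eLpNorm (evalPoly P) q μR) * B *
        ENNReal.ofReal ((R ^ N : ℝ) ^ e)
      ≥ ENNReal.ofReal (R ^ (-(s + a))) * ENNReal.ofReal (c * R ^ (d + N)) := by
    calc ENNReal.ofReal (R ^ (-(s + a))) * eLpNorm (evalPoly P) q μR * B *
          ENNReal.ofReal ((R ^ N : ℝ) ^ e)
        = ENNReal.ofReal (R ^ (-(s + a))) *
            (eLpNorm (evalPoly P) q μR * (ENNReal.ofReal ((R ^ N : ℝ) ^ e) * B)) := by ring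
      _ ≥ ENNReal.ofReal (R ^ (-(s + a))) * eLpNorm (evalPoly P) 1 μR :=
          mul_le_mul_right (hH.trans (le_of_eq (by ring))) _
      _ ≥ ENNReal.ofReal (R ^ (-(s + a))) * ENNReal.ofReal (c * R ^ (d + N)) :=
          mul_le_mul_right hL1 _
  -- identify both sides as `ofReal` of real powers and cancel
  rw [← ENNReal.mul_le_mul_iff_left hcancel_ne ENNReal.ofReal_ne_top
    (a := ENNReal.ofReal c * ENNReal.ofReal (R ^ ((d:ℝ) - s)))]
  refine le_trans (le_of_eq ?_) hchain
  have h1 : ((R:ℝ) ^ N) ^ e = R ^ ((N:ℝ) * e) := by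
    rw [← Real.rpow_natCast R N, ← Real.rpow_mul hR0.le]
  have h2 : (R:ℝ) ^ (d + N) = R ^ ((d:ℝ) + (N:ℝ)) := by
    rw [← Real.rpow_natCast R (d + N)]; push_cast; ring_nf
  rw [h1, h2, ← ENNReal.ofReal_mul hc.le, ← ENNReal.ofReal_mul (by positivity),
    ← ENNReal.ofReal_mul (by positivity)]
  congr 1
  rw [show c * R ^ ((d:ℝ) - s) * R ^ ((N:ℝ) * e)
      = c * (R ^ ((d:ℝ) - s) * R ^ ((N:ℝ) * e)) from by ring,
    ← Real.rpow_add hR0,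
    show R ^ (-(s + a)) * (c * R ^ ((d:ℝ) + (N:ℝ)))
      = c * (R ^ (-(s + a)) * R ^ ((d:ℝ) + (N:ℝ))) from by ring,
    ← Real.rpow_add hR0]
  congr 2
  rw [he, ha]
  ring

end Aux

/-- **Polynomials in `M^{s,q}` and `M₀^{s,q}`**: a polynomial `P` belongs to `M^{s,q}`
iff `deg P ≤ s` and to `M₀^{s,q}` iff `deg P < s` (the zero polynomial, of degree `-∞`,
belongs to every such space). -/
theorem polynomial_mem_Msq_iff {N : ℕ} (hN : 0 < N) (s : ℝ) (q : ℝ≥0∞) (hq : 1 ≤ q)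
    (P : MvPolynomial (Fin N) ℂ) :
    (MemM s q (evalPoly P) ↔ (P = 0 ∨ (P.totalDegree : ℝ) ≤ s)) ∧
    (MemM0 s q (evalPoly P) ↔ (P = 0 ∨ (P.totalDegree : ℝ) < s)) := by
  have hmeas : AEStronglyMeasurable (evalPoly P) volume :=
    (Aux.continuous_evalPoly P).aestronglyMeasurable
  set F : ℝ → ℝ≥0∞ := fun R =>
    ENNReal.ofReal (R ^ (-(s + N / q.toReal))) *
      eLpNorm (evalPoly P) q (volume.restrict (ball (0 : Euc N) R)) with hF
  have hMnorm : Mnorm s q (evalPoly P) = ⨆ R : {R : ℝ // 1 ≤ R}, F (R : ℝ) := rfl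
  by_cases hP : P = 0
  · subst hP
    have hzero : evalPoly (0 : MvPolynomial (Fin N) ℂ) = (fun _ => (0 : ℂ)) := by
      funext x; simp [evalPoly]
    have hF0 : F = fun _ => 0 := by
      funext R
      rw [hF]
      simp only [hzero]
      rw [eLpNorm_zero']
      simp
    constructor
    · refine ⟨fun _ => Or.inl rfl, fun _ => ⟨hmeas, ?_⟩⟩
      rw [hMnorm, hF0]
      exact lt_of_le_of_lt (iSup_le fun _ => (le_rfl : (0:ℝ≥0∞) ≤ 0)) ENNReal.zero_lt_top
    · refine ⟨fun _ => Or.inl rfl, fun _ => ⟨hmeas, ?_⟩⟩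
      rw [show (fun R : ℝ =>
          ENNReal.ofReal (R ^ (-(s + N / q.toReal))) *
            eLpNorm (evalPoly (0 : MvPolynomial (Fin N) ℂ)) q
              (volume.restrict (ball (0 : Euc N) R))) = F from rfl, hF0]
      exact tendsto_const_nhds
  · set d := P.totalDegree with hd
    obtain ⟨C, hCtop, hC⟩ := Aux.eLpNorm_ball_le hN P q
    obtain ⟨c, hc, B, hB0, hBtop, R₀, hR₀, hkey⟩ := Aux.key_lower hN P hP q hq s
    have hupper : ∀ R : ℝ, 1 ≤ R → F R ≤ C * ENNReal.ofReal (R ^ ((d : ℝ) - s)) := by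
      intro R hR
      have hR0 : (0:ℝ) < R := lt_of_lt_of_le one_pos hR
      calc F R ≤ ENNReal.ofReal (R ^ (-(s + N / q.toReal))) *
            (C * ENNReal.ofReal (R ^ ((d : ℝ) + N / q.toReal))) :=
            mul_le_mul_right (hC R hR) _
        _ = C * ENNReal.ofReal (R ^ (-(s + N / q.toReal)) * R ^ ((d : ℝ) + N / q.toReal)) := by
            rw [ENNReal.ofReal_mul (by positivity)]; ring
        _ = C * ENNReal.ofReal (R ^ ((d : ℝ) - s)) := by
            rw [← Real.rpow_add hR0]
            congr 2
            ring
    have hterm_le : ∀ R : ℝ, 1 ≤ R → F R ≤ Mnorm s q (evalPoly P) := by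
      intro R hR1
      rw [hMnorm]
      exact le_iSup (fun R : {R : ℝ // 1 ≤ R} => F (R : ℝ)) ⟨R, hR1⟩
    constructor
    · constructor
      · -- MemM → d ≤ s
        rintro ⟨-, hfin⟩
        by_contra hcon
        push_neg at hcon
        obtain ⟨-, hsd⟩ := hcon
        have hkey' : ∀ R : ℝ, R₀ ≤ R →
            ENNReal.ofReal c * ENNReal.ofReal (R ^ ((d:ℝ) - s)) ≤ F R * B := by
          intro R h; rw [hF]; exact hkey R h
        set M : ℝ≥0∞ := Mnorm s q (evalPoly P) * B with hM
        have hMtop : M ≠ ⊤ := ENNReal.mul_ne_top hfin.ne hBtop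
        have hev : ∀ᶠ R : ℝ in atTop,
            ((M.toReal + 1) / c ≤ R ^ ((d:ℝ) - s)) ∧ R₀ ≤ R :=
          ((tendsto_rpow_atTop (by linarith : (0:ℝ) < (d:ℝ) - s)).eventually_ge_atTop
            ((M.toReal + 1) / c)).and (eventually_ge_atTop R₀)
        obtain ⟨R, hR1, hR2⟩ := hev.exists
        have hRR1 : (1:ℝ) ≤ R := le_trans hR₀ hR2
        have hchain : ENNReal.ofReal c * ENNReal.ofReal (R ^ ((d:ℝ) - s)) ≤ M := by
          refine (hkey' R hR2).trans ?_
          exact mul_le_mul_left (hterm_le R hRR1) B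
        have hlhs : ENNReal.ofReal (M.toReal + 1)
            ≤ ENNReal.ofReal c * ENNReal.ofReal (R ^ ((d:ℝ) - s)) := by
          rw [← ENNReal.ofReal_mul hc.le]
          apply ENNReal.ofReal_le_ofReal
          have h2 := (div_le_iff₀ hc).1 hR1
          rw [mul_comm] at h2
          linarith
        have hMlt : M < ENNReal.ofReal (M.toReal + 1) :=
          (ENNReal.lt_ofReal_iff_toReal_lt hMtop).2 (by linarith)
        exact absurd (hMlt.trans_le (hlhs.trans hchain)) (lt_irrefl M)
      · rintro (h0 | hds)
        · exact absurd h0 hP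
        refine ⟨hmeas, ?_⟩
        rw [hMnorm]
        refine lt_of_le_of_lt (iSup_le fun R => ?_) (lt_top_iff_ne_top.2 hCtop)
        refine (hupper R R.2).trans ?_
        calc C * ENNReal.ofReal ((R:ℝ) ^ ((d : ℝ) - s)) ≤ C * 1 := by
              refine mul_le_mul_right ?_ _
              exact ENNReal.ofReal_le_one.2
                (Real.rpow_le_one_of_one_le_of_nonpos R.2 (by linarith))
          _ = C := mul_one C
    · constructor
      · -- MemM0 → d < s
        rintro ⟨-, htend⟩
        by_contra hcon
        push_neg at hcon
        obtain ⟨-, hsd⟩ := hcon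
        have hkey' : ∀ R : ℝ, R₀ ≤ R →
            ENNReal.ofReal c * ENNReal.ofReal (R ^ ((d:ℝ) - s)) ≤ F R * B := by
          intro R h; rw [hF]; exact hkey R h
        have htend' : Tendsto F atTop (nhds 0) := htend
        have htendF : Tendsto (fun R : ℝ => F R * B) atTop (nhds 0) := by
          have h2 := ENNReal.Tendsto.mul_const htend' (Or.inr hBtop)
          simpa using h2
        have hev1 : ∀ᶠ R : ℝ in atTop, F R * B < ENNReal.ofReal c :=
          htendF.eventually_lt_const (ENNReal.ofReal_pos.2 hc)
        have hev2 : ∀ᶠ R : ℝ in atTop, ENNReal.ofReal c ≤ F R * B := by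
          filter_upwards [eventually_ge_atTop R₀, eventually_ge_atTop (1:ℝ)] with R h1 h2
          calc ENNReal.ofReal c = ENNReal.ofReal c * 1 := (mul_one _).symm
            _ ≤ ENNReal.ofReal c * ENNReal.ofReal (R ^ ((d:ℝ) - s)) :=
                mul_le_mul_right (ENNReal.one_le_ofReal.2 (Real.one_le_rpow h2 (by linarith))) _
            _ ≤ F R * B := hkey' R h1
        obtain ⟨R, hlt, hle⟩ := (hev1.and hev2).exists
        exact absurd hle (not_le.2 hlt)
      · rintro (h0 | hds)
        · exact absurd h0 hP
        refine ⟨hmeas, ?_⟩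
        have hg : Tendsto (fun R : ℝ => C * ENNReal.ofReal (R ^ ((d:ℝ) - s))) atTop (nhds 0) := by
          have h0 : Tendsto (fun R : ℝ => R ^ ((d:ℝ) - s)) atTop (nhds 0) := by
            have := tendsto_rpow_neg_atTop (y := s - (d:ℝ)) (by linarith)
            simpa [neg_sub] using this
          have h1 := ENNReal.tendsto_ofReal (f := atTop) h0
          have h2 := ENNReal.Tendsto.const_mul h1 (Or.inr hCtop)
          simpa using h2
        refine tendsto_of_tendsto_of_tendsto_of_le_of_le' tendsto_const_nhds hg
          (Filter.Eventually.of_forall fun R => by simp) ?_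
        filter_upwards [eventually_ge_atTop (1:ℝ)] with R hR
        exact hupper R hR
end
end
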